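/- Let k be a field, (P, ⪯) a totally ordered set, and V a finite-dimensional k-vector space, and let V ⊗ k_P denote the constant persistence module with value V and identity structure maps. Suppose 0 → ⊕_{a∈A} k_{I_a} → V ⊗ k_P → ⊕_{b∈B} k_{J_b} → 0 is a short exact sequence of persistence modules (exact at every p ∈ P), where every interval I_a is unbounded below and different from P, and every interval J_b is unbounded above and different from P. Then A and B are finite and there is a bijection σ : A → B with J_{σ(a)} = P ∖ I_a for every a ∈ A. -/

import Mathlib

set_option linter.unusedSectionVars false

open Classical

universe u v w w'

section Persistence

variable (k : Type u) [Field k] (P : Type v) [LinearOrder P]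

/-- A persistence module over the poset `P`: a functor assigning to each `p : P` a
`k`-vector space and to each pair `p ⪰ p'` a linear map `M p → M p'`. -/
structure PersistenceModule where
  carrier : P → Type w
  [acg : ∀ p, AddCommGroup (carrier p)]
  [mod : ∀ p, Module k (carrier p)]
  map : ∀ {p p' : P}, p' ≤ p → (carrier p →ₗ[k] carrier p')
  map_id : ∀ p : P, map (le_refl p) = LinearMap.id
  map_comp : ∀ {p p' p'' : P} (h1 : p'' ≤ p') (h2 : p' ≤ p),
      (map h1).comp (map h2) = map (h1.trans h2)

attribute [instance] PersistenceModule.acg PersistenceModule.mod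

variable {k P}

/-- A morphism of persistence modules. -/
structure PersistenceHom (M : PersistenceModule.{u,v,w} k P)
    (N : PersistenceModule.{u,v,w'} k P) where
  f : ∀ p : P, M.carrier p →ₗ[k] N.carrier p
  comm : ∀ {p p' : P} (h : p' ≤ p), (N.map h).comp (f p) = (f p').comp (M.map h)

/-- An isomorphism of persistence modules. -/
structure PersistenceIso (M : PersistenceModule.{u,v,w} k P)
    (N : PersistenceModule.{u,v,w'} k P) where
  e : ∀ p : P, M.carrier p ≃ₗ[k] N.carrier p
  comm : ∀ {p p' : P} (h : p' ≤ p) (x : M.carrier p), e p' (M.map h x) = N.map h (e p x)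

variable (P)

/-- An interval of `P`: a nonempty convex subset. -/
def IsInterval (I : Set P) : Prop :=
  I.Nonempty ∧ ∀ ⦃a b c : P⦄, a ∈ I → c ∈ I → a ≤ b → b ≤ c → b ∈ I

variable (k)

/-- The fibre of the interval module `k_I` at `p`: a copy of `k` if `p ∈ I`, zero otherwise. -/
noncomputable def intervalCarrier (I : Set P) (p : P) : Submodule k k :=
  if p ∈ I then ⊤ else ⊥

theorem intervalCarrier_eq_zero {I : Set P} {p : P} (hp : p ∉ I)
    (x : intervalCarrier k P I p) : (x : k) = 0 := by
  have hx := x.2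
  simp only [intervalCarrier, if_neg hp, Submodule.mem_bot] at hx
  exact hx

/-- The structure maps of the interval module. -/
noncomputable def intervalMapAux (I : Set P) (p p' : P) :
    intervalCarrier k P I p →ₗ[k] intervalCarrier k P I p' where
  toFun x := ⟨if p' ∈ I then (x : k) else 0, by
    split_ifs with h
    · simp [intervalCarrier, h]
    · exact (intervalCarrier k P I p').zero_mem⟩
  map_add' x y := by
    apply Subtype.ext
    by_cases h : p' ∈ I <;> simp [h]
  map_smul' c x := by
    apply Subtype.ext
    by_cases h : p' ∈ I <;> simp [h]

/-- The interval module `k_I` associated to an interval `I ⊆ P`. -/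
noncomputable def intervalModule (I : Set P) (hI : IsInterval P I) :
    PersistenceModule.{u,v,u} k P where
  carrier p := intervalCarrier k P I p
  map {p p'} _ := intervalMapAux k P I p p'
  map_id p := by
    ext x
    by_cases h : p ∈ I
    · simp [intervalMapAux, h]
    · have hx := intervalCarrier_eq_zero k P h x
      simp [intervalMapAux, h, hx]
  map_comp {p p' p''} h1 h2 := by
    ext x
    by_cases h'' : p'' ∈ I
    · by_cases h' : p' ∈ I
      · simp [intervalMapAux, h', h'']
      · have hp : p ∉ I := fun hp => h' (hI.2 h'' hp h1 h2)
        have hx := intervalCarrier_eq_zero k P hp x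
        simp [intervalMapAux, h', h'', hx]
    · simp [intervalMapAux, h'']

/-- The pointwise direct sum of a family of persistence modules. -/
noncomputable def directSumPM {A : Type w'} (Ms : A → PersistenceModule.{u,v,w} k P) :
    PersistenceModule k P where
  carrier p := Π₀ a, (Ms a).carrier p
  map h := DFinsupp.mapRange.linearMap (fun a => (Ms a).map h)
  map_id p := by
    try dsimp only
    have h : (fun a => (Ms a).map (le_refl p)) = fun a => LinearMap.id := by
      funext a; exact (Ms a).map_id p
    rw [h, DFinsupp.mapRange.linearMap_id]
  map_comp h1 h2 := by
    try dsimp only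
    rw [← DFinsupp.mapRange.linearMap_comp]
    congr 1
    funext a
    exact (Ms a).map_comp h1 h2

end Persistence

/-!
At each `p`, exactness gives `#{a | p ∈ I a} + #{b | p ∈ J b} = dim V`, because the fibre of
`⊕ k_{I a}` at `p` has a basis indexed by `{a | p ∈ I a}`. The `I a` are down-sets and the `J b`
up-sets of a linear order, so each family is a chain, and finitely many members of a chain of
nonempty sets share a point; hence every finite part of `A` or `B` has at most `dim V` elements.
A point lying in every `J b` and in no `I a` then gives `#B = dim V`, so the families `I a` and
`P ∖ J b` of nonempty down-sets have the same counting function `p ↦ #{members containing p}`.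
A finite chain of nonempty sets is determined by its counting function: its largest member is the
set of points counted at least once, and removing it from both sides lets one induct.
-/

open Module

section Chains

variable {α : Type*} {𝒞 : Set (Set α)}

theorem isChain_isLowerSet_nonempty (P : Type*) [LinearOrder P] :
    IsChain (· ⊆ ·) {s : Set P | IsLowerSet s ∧ s.Nonempty} :=
  fun _ hs _ ht _ => hs.1.total ht.1

theorem isChain_isUpperSet_nonempty (P : Type*) [LinearOrder P] :
    IsChain (· ⊆ ·) {s : Set P | IsUpperSet s ∧ s.Nonempty} :=
  fun _ hs _ ht _ => hs.1.total ht.1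

theorem exists_forall_mem_of_isChain [Nonempty α] (h𝒞 : IsChain (· ⊆ ·) 𝒞)
    (hne : ∀ s ∈ 𝒞, s.Nonempty) {ι : Type*} [Finite ι] (L : ι → Set α) (hL : ∀ i, L i ∈ 𝒞) :
    ∃ x, ∀ i, x ∈ L i := by
  cases isEmpty_or_nonempty ι with
  | inl _ => exact ⟨Classical.arbitrary α, fun i => isEmptyElim i⟩
  | inr _ =>
    have := Fintype.ofFinite ι
    have hdir : Directed (· ⊇ ·) L := fun i j =>
      (h𝒞.total (hL i) (hL j)).elim (fun h => ⟨i, le_rfl, h⟩) (fun h => ⟨j, h, le_rfl⟩)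
    obtain ⟨z, hz⟩ := hdir.finset_le Finset.univ
    obtain ⟨x, hx⟩ := hne _ (hL z)
    exact ⟨x, fun i => hz i (Finset.mem_univ i) hx⟩

theorem finite_of_isChain_of_encard_fiber_le (h𝒞 : IsChain (· ⊆ ·) 𝒞)
    (hne : ∀ s ∈ 𝒞, s.Nonempty) {ι : Type*} (L : ι → Set α) (hL : ∀ i, L i ∈ 𝒞) (n : ℕ)
    (hn : ∀ x, ENat.card {i // x ∈ L i} ≤ n) : Finite ι := by
  by_contra hfin
  have : Infinite ι := not_finite_iff_infinite.mp hfin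
  have : Nonempty α := (hne _ (hL (Classical.arbitrary ι))).nonempty
  obtain ⟨s, hs⟩ := Infinite.exists_subset_card_eq ι (n + 1)
  obtain ⟨x, hx⟩ := exists_forall_mem_of_isChain h𝒞 hne (fun i : s => L i) fun i => hL i
  have hle : ENat.card s ≤ ENat.card {i // x ∈ L i} :=
    ENat.card_le_card_of_injective (f := fun i : s => ⟨i, hx i⟩)
      fun i j h => Subtype.ext (congrArg (fun y => y.1) h)
  rw [ENat.card_eq_coe_fintype_card, Fintype.card_coe, hs] at hle
  exact absurd (hle.trans (hn x)) (by norm_cast; omega)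

end Chains

namespace Multiset

variable {α : Type*} {𝒞 : Set (Set α)}

theorem exists_mem_forall_subset_of_isChain (h𝒞 : IsChain (· ⊆ ·) 𝒞) {m : Multiset (Set α)}
    (hm : m ≠ 0) (h : ∀ s ∈ m, s ∈ 𝒞) : ∃ s ∈ m, ∀ t ∈ m, t ⊆ s := by
  obtain ⟨s, hs⟩ := m.toFinset.exists_maximal (toFinset_nonempty.mpr hm)
  have hsm : s ∈ m := mem_toFinset.mp hs.prop
  refine ⟨s, hsm, fun t ht => ?_⟩
  rcases h𝒞.total (h t ht) (h s hsm) with hts | hst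
  · exact hts
  · exact hs.le_of_ge (mem_toFinset.mpr ht) hst

theorem eq_zero_iff_forall_card_filter_mem_eq_zero {m : Multiset (Set α)}
    (hm : ∀ s ∈ m, s.Nonempty) : m = 0 ↔ ∀ x, card (m.filter (x ∈ ·)) = 0 := by
  refine ⟨fun h x => by simp [h], fun h => ?_⟩
  by_contra hne
  obtain ⟨s, hs⟩ := exists_mem_of_ne_zero hne
  obtain ⟨x, hx⟩ := hm s hs
  exact filter_eq_nil.mp (card_eq_zero.mp (h x)) s hs hx

theorem mem_iff_card_filter_mem_pos {m : Multiset (Set α)} {s : Set α} (hs : s ∈ m)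
    (hmax : ∀ t ∈ m, t ⊆ s) (x : α) : x ∈ s ↔ 0 < card (m.filter (x ∈ ·)) := by
  rw [card_pos_iff_exists_mem]
  exact ⟨fun hx => ⟨s, mem_filter.mpr ⟨hs, hx⟩⟩,
    fun ⟨t, ht⟩ => hmax t (mem_filter.mp ht).1 (mem_filter.mp ht).2⟩

theorem eq_of_forall_card_filter_mem_eq (h𝒞 : IsChain (· ⊆ ·) 𝒞) (hne : ∀ s ∈ 𝒞, s.Nonempty)
    {m₁ m₂ : Multiset (Set α)} (h₁ : ∀ s ∈ m₁, s ∈ 𝒞) (h₂ : ∀ s ∈ m₂, s ∈ 𝒞)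
    (hcount : ∀ x, card (m₁.filter (x ∈ ·)) = card (m₂.filter (x ∈ ·))) : m₁ = m₂ := by
  induction m₁ using strongInductionOn generalizing m₂ with
  | ih m₁ ih =>
    have hzero : m₁ = 0 ↔ m₂ = 0 := by
      rw [eq_zero_iff_forall_card_filter_mem_eq_zero fun s hs => hne s (h₁ s hs),
        eq_zero_iff_forall_card_filter_mem_eq_zero fun s hs => hne s (h₂ s hs)]
      simp only [hcount]
    rcases eq_or_ne m₁ 0 with hm₁ | hm₁
    · rw [hm₁, hzero.mp hm₁]
    obtain ⟨s₁, hs₁, hmax₁⟩ := exists_mem_forall_subset_of_isChain h𝒞 hm₁ h₁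
    obtain ⟨s₂, hs₂, hmax₂⟩ := exists_mem_forall_subset_of_isChain h𝒞 (mt hzero.mpr hm₁) h₂
    have hs : s₁ = s₂ := by
      ext x
      rw [mem_iff_card_filter_mem_pos hs₁ hmax₁, mem_iff_card_filter_mem_pos hs₂ hmax₂, hcount]
    subst hs
    rw [← cons_erase hs₁, ← cons_erase hs₂]
    congr 1
    refine ih _ (erase_lt.mpr hs₁) (fun s hs => h₁ s (mem_of_mem_erase hs))
      (fun s hs => h₂ s (mem_of_mem_erase hs)) fun x => ?_
    have h := hcount x
    rw [← cons_erase hs₁, ← cons_erase hs₂, filter_cons, filter_cons] at h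
    split_ifs at h <;> simpa using h

end Multiset

theorem exists_equiv_of_multiset_map_univ_eq {A B γ : Type*} [Fintype A] [Fintype B]
    (U : A → γ) (W : B → γ) (h : Finset.univ.val.map U = Finset.univ.val.map W) :
    ∃ σ : A ≃ B, ∀ a, W (σ a) = U a := by
  refine ⟨Equiv.ofFiberEquiv fun c => Fintype.equivOfCardEq ?_, Equiv.ofFiberEquiv_map _⟩
  simpa [Multiset.count_map, Fintype.card_subtype, Finset.card_def, eq_comm] using
    congrArg (Multiset.count c) h

theorem exists_equiv_of_isChain_of_natCard_fiber_eq {α : Type*} {𝒞 : Set (Set α)}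
    (h𝒞 : IsChain (· ⊆ ·) 𝒞) (hne : ∀ s ∈ 𝒞, s.Nonempty) {A B : Type*} [Finite A] [Finite B]
    (U : A → Set α) (W : B → Set α) (hU : ∀ a, U a ∈ 𝒞) (hW : ∀ b, W b ∈ 𝒞)
    (hcount : ∀ x, Nat.card {a // x ∈ U a} = Nat.card {b // x ∈ W b}) :
    ∃ σ : A ≃ B, ∀ a, W (σ a) = U a := by
  cases nonempty_fintype A
  cases nonempty_fintype B
  refine exists_equiv_of_multiset_map_univ_eq U W
    (Multiset.eq_of_forall_card_filter_mem_eq h𝒞 hne (by simpa using hU) (by simpa using hW)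
      fun x => ?_)
  simpa [Multiset.filter_map, Nat.card_eq_fintype_card, Fintype.card_subtype, Finset.card_def]
    using hcount x

theorem exists_equiv_eq_compl_of_natCard_add_natCard_eq {P : Type*} [LinearOrder P]
    {A B : Type*} [Finite A] [Finite B] {I : A → Set P} {J : B → Set P}
    (hI : ∀ a, IsLowerSet (I a)) (hJ : ∀ b, IsUpperSet (J b)) (hIne : ∀ a, (I a).Nonempty)
    (hIcompl : ∀ a, (I a)ᶜ.Nonempty) (hJne : ∀ b, (J b).Nonempty) (hJcompl : ∀ b, (J b)ᶜ.Nonempty)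
    (n : ℕ) (hcount : ∀ p, Nat.card {a // p ∈ I a} + Nat.card {b // p ∈ J b} = n) :
    ∃ σ : A ≃ B, ∀ a, J (σ a) = (I a)ᶜ := by
  have hcount' : ∀ p, Nat.card {a // p ∈ I a} = Nat.card {b // p ∈ (J b)ᶜ} := fun p => by
    have : Nonempty P := ⟨p⟩
    obtain ⟨q, hq⟩ := exists_forall_mem_of_isChain (isChain_isUpperSet_nonempty P)
      (fun _ h => h.2) (Sum.elim J fun a => (I a)ᶜ)
      (Sum.rec (fun b => ⟨hJ b, hJne b⟩) fun a => ⟨(hI a).compl, hIcompl a⟩)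
    have hB : Nat.card B = n := by
      have : IsEmpty {a // q ∈ I a} := ⟨fun a => hq (.inr a.1) a.2⟩
      rw [← hcount q, Nat.card_of_isEmpty (α := {a // q ∈ I a}), zero_add]
      exact Nat.card_congr (Equiv.subtypeUnivEquiv fun b => hq (.inl b)).symm
    have hBp : Nat.card {b // p ∈ J b} + Nat.card {b // p ∈ (J b)ᶜ} = Nat.card B := by
      rw [← Nat.card_sum]
      exact Nat.card_congr (Equiv.sumCompl fun b => p ∈ J b)
    have := hcount p
    omega
  obtain ⟨σ, hσ⟩ := exists_equiv_of_isChain_of_natCard_fiber_eq (isChain_isLowerSet_nonempty P)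
    (fun _ h => h.2) I (fun b => (J b)ᶜ) (fun a => ⟨hI a, hIne a⟩)
    (fun b => ⟨(hJ b).compl, hJcompl b⟩) hcount'
  exact ⟨σ, fun a => (compl_eq_comm.mp (hσ a)).symm⟩

section LinearAlgebra

variable {K M N Q ι : Type*} [DivisionRing K] [AddCommGroup M] [Module K M] [AddCommGroup N]
  [Module K N] [AddCommGroup Q] [Module K Q]

theorem finrank_add_finrank_of_shortExact [FiniteDimensional K N] (f : M →ₗ[K] N)
    (g : N →ₗ[K] Q) (hf : Function.Injective f) (hg : Function.Surjective g)
    (hfg : LinearMap.range f = LinearMap.ker g) : finrank K M + finrank K Q = finrank K N := by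
  have h := LinearMap.finrank_range_add_finrank_ker g
  rwa [LinearMap.range_eq_top.mpr hg, finrank_top, ← hfg, LinearMap.finrank_range_of_inj hf,
    add_comm] at h

theorem Module.Basis.encard_le_finrank_of_injective [FiniteDimensional K N] (b : Basis ι K M)
    (f : M →ₗ[K] N) (hf : Function.Injective f) : ENat.card ι ≤ finrank K N := by
  have := FiniteDimensional.of_injective f hf
  have := Module.Finite.finite_basis b
  rw [ENat.card_eq_coe_natCard, ← finrank_eq_nat_card_basis b]
  exact_mod_cast LinearMap.finrank_le_finrank_of_injective hf

theorem Module.Basis.encard_le_finrank_of_surjective [FiniteDimensional K N] (b : Basis ι K M)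
    (f : N →ₗ[K] M) (hf : Function.Surjective f) : ENat.card ι ≤ finrank K N := by
  have := FiniteDimensional.of_surjective f hf
  have := Module.Finite.finite_basis b
  rw [ENat.card_eq_coe_natCard, ← finrank_eq_nat_card_basis b, ← finrank_top,
    ← LinearMap.range_eq_top.mpr hf]
  exact_mod_cast LinearMap.finrank_range_le f

end LinearAlgebra

section IntervalSum

variable {k : Type u} [Field k] {P : Type v} [LinearOrder P] {A : Type*}

theorem one_mem_intervalCarrier {I : Set P} {p : P} (hp : p ∈ I) :
    (1 : k) ∈ intervalCarrier k P I p := by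
  simp [intervalCarrier, hp]

theorem linearIndependent_intervalSum_single (I : A → Set P) (p : P) :
    LinearIndependent k fun a : {a // p ∈ I a} => (DFinsupp.single a.1
      ⟨1, one_mem_intervalCarrier a.2⟩ : Π₀ a, intervalCarrier k P (I a) p) := by
  have hone : ∀ a, LinearIndependent k fun u : {_u : Unit // p ∈ I a} =>
      (⟨1, one_mem_intervalCarrier u.2⟩ : intervalCarrier k P (I a) p) := fun a =>
    (linearIndependent_subsingleton_index_iff _).2 fun _ h => one_ne_zero (congrArg Subtype.val h)
  convert (DFinsupp.linearIndependent_single _ hone).comp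
    (fun a : {a // p ∈ I a} => ⟨a.1, (), a.2⟩) (fun a b h => Subtype.ext (congrArg Sigma.fst h))
    using 1
  funext a
  simp only [Function.comp_apply]

noncomputable def intervalSumBasis (I : A → Set P) (p : P) :
    Basis {a // p ∈ I a} k (Π₀ a, intervalCarrier k P (I a) p) :=
  Basis.mk (linearIndependent_intervalSum_single I p) (by
    rintro x -
    induction x using DFinsupp.induction with
    | h0 => exact zero_mem _
    | ha a y x _ _ ih =>
      refine add_mem ?_ ih
      by_cases ha : p ∈ I a
      · have hy : DFinsupp.single a y = (y : k) • (DFinsupp.single a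
            ⟨1, one_mem_intervalCarrier ha⟩ : Π₀ a, intervalCarrier k P (I a) p) := by
          rw [← DFinsupp.single_smul]
          congr
          ext
          simp
        rw [hy]
        exact Submodule.smul_mem _ _ (Submodule.subset_span ⟨⟨a, ha⟩, rfl⟩)
      · rw [show y = 0 from Subtype.ext (intervalCarrier_eq_zero k P ha y), DFinsupp.single_zero]
        exact zero_mem _)

end IntervalSum

section Statement16

variable (k : Type u) [Field k] (P : Type v) [LinearOrder P]

/-- An interval is bounded below if some point of `P` outside it lies strictly below a point
of it. -/
def BddBelowInterval (I : Set P) : Prop := ∃ p ∉ I, ∃ p' ∈ I, p < p'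

/-- An interval is bounded above if some point of `P` outside it lies strictly above a point
of it. -/
def BddAboveInterval (I : Set P) : Prop := ∃ p ∉ I, ∃ p' ∈ I, p' < p

/-- The constant persistence module with value `V` and identity structure maps. -/
def constPM (V : Type w) [AddCommGroup V] [Module k V] : PersistenceModule k P where
  carrier _ := V
  map _ := LinearMap.id
  map_id _ := rfl
  map_comp _ _ := rfl

theorem isLowerSet_of_not_bddBelowInterval {Q : Type*} [LinearOrder Q] {I : Set Q}
    (h : ¬ BddBelowInterval Q I) : IsLowerSet I := fun q p hpq hq => by
  by_contra hp
  exact h ⟨p, hp, q, hq, lt_of_le_of_ne hpq fun hpq => hp (hpq ▸ hq)⟩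

theorem isUpperSet_of_not_bddAboveInterval {Q : Type*} [LinearOrder Q] {J : Set Q}
    (h : ¬ BddAboveInterval Q J) : IsUpperSet J := fun p q hpq hp => by
  by_contra hq
  exact h ⟨q, hq, p, hp, lt_of_le_of_ne hpq fun hpq => hq (hpq ▸ hp)⟩

/-- if `0 → ⊕_a k_{I_a} → V ⊗ k_P → ⊕_b k_{J_b} → 0` is a short exact sequence
of persistence modules, with `V` finite dimensional, every `I_a` unbounded below and `≠ P`,
and every `J_b` unbounded above and `≠ P`, then `A` and `B` are finite and there is a
bijection `σ : A ≃ B` with `J_{σ(a)} = P ∖ I_a`. -/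
theorem statement16 (V : Type u) [AddCommGroup V] [Module k V] [FiniteDimensional k V]
    {A : Type w'} {B : Type w''} (I : A → Set P) (J : B → Set P)
    (hI : ∀ a, IsInterval P (I a)) (hJ : ∀ b, IsInterval P (J b))
    (hIub : ∀ a, ¬ BddBelowInterval P (I a)) (hIne : ∀ a, I a ≠ Set.univ)
    (hJub : ∀ b, ¬ BddAboveInterval P (J b)) (hJne : ∀ b, J b ≠ Set.univ)
    (f : PersistenceHom (directSumPM k P (fun a => intervalModule k P (I a) (hI a)))
      (constPM k P V))
    (g : PersistenceHom (constPM k P V)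
      (directSumPM k P (fun b => intervalModule k P (J b) (hJ b))))
    (hf : ∀ p : P, Function.Injective (f.f p))
    (hg : ∀ p : P, Function.Surjective (g.f p))
    (hexact : ∀ p : P, LinearMap.range (f.f p) = LinearMap.ker (g.f p)) :
    Finite A ∧ Finite B ∧ ∃ σ : A ≃ B, ∀ a : A, J (σ a) = (I a)ᶜ := by
  have hIlow a : IsLowerSet (I a) := isLowerSet_of_not_bddBelowInterval (hIub a)
  have hJup b : IsUpperSet (J b) := isUpperSet_of_not_bddAboveInterval (hJub b)
  have : Finite A := finite_of_isChain_of_encard_fiber_le (isChain_isLowerSet_nonempty P)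
    (fun _ h => h.2) I (fun a => ⟨hIlow a, (hI a).1⟩) (finrank k V)
    fun p => (intervalSumBasis (k := k) I p).encard_le_finrank_of_injective _ (hf p)
  have : Finite B := finite_of_isChain_of_encard_fiber_le (isChain_isUpperSet_nonempty P)
    (fun _ h => h.2) J (fun b => ⟨hJup b, (hJ b).1⟩) (finrank k V)
    fun p => (intervalSumBasis (k := k) J p).encard_le_finrank_of_surjective _ (hg p)
  refine ⟨‹_›, ‹_›, exists_equiv_eq_compl_of_natCard_add_natCard_eq hIlow hJup (fun a => (hI a).1)
    (fun a => Set.nonempty_compl.2 (hIne a)) (fun b => (hJ b).1)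
    (fun b => Set.nonempty_compl.2 (hJne b)) (finrank k V) fun p => ?_⟩
  rw [← finrank_eq_nat_card_basis (intervalSumBasis (k := k) I p),
    ← finrank_eq_nat_card_basis (intervalSumBasis (k := k) J p)]
  exact finrank_add_finrank_of_shortExact (f.f p) (g.f p) (hf p) (hg p) (hexact p)
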